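/- Let C be an (n,k) cyclic code over GF(q) with circulant parity-check matrix, n = c·l, and generator roots β_0,...,β_{n-k-1}. Partition the roots into m classes Ω_e = {β_{e,0},...,β_{e,r_e-1}} of roots equal in c-th power, with coefficients λ_{e,f} as in the parity-check vector expansion. Then the type-1 descendant circulant Ψ(h̃_j) (generated by the j-th cyclic section of the parity-check vector) equals Σ_{e=0}^{m-1} λ*_{e,j} Ψ(ṽ*_{e,0}), where λ*_{e,j} = Σ_{f=0}^{r_e-1} λ_{e,f} β_{e,f}^j and ṽ*_{e,0} = (1, β_{e,0}^c, β_{e,0}^{2c}, ..., β_{e,0}^{(l-1)c}); consequently the generator polynomial of the cyclic code given by the null space of Ψ(h̃_j) has β_{e,0}^c as a root if and only if λ*_{e,j} ≠ 0. -/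

import Mathlib

open Polynomial

namespace Paper

variable {K : Type*} [Field K]

/-- Entry `(i,j)` of the `n×n` circulant `Ψ(w)`: `w ((j - i) mod n)`. -/
def psiEnt (n : ℕ) (w : ℕ → K) (i j : ℕ) : K := w ((j + n - i) % n)

/-- The `l×l` circulant matrix with generator `v`. -/
def psiMat (l : ℕ) (v : ℕ → K) : Matrix (Fin l) (Fin l) K :=
  fun i j => psiEnt l v i.val j.val

/-- The parity-check vector `h̃ = (h_k, h_{k-1}, …, h_0, 0, …, 0)` of a cyclic code with
parity-check polynomial `h`. -/
def tildeH (k : ℕ) (h : K[X]) : ℕ → K := fun u => if u ≤ k then h.coeff (k - u) else 0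

/-- The coefficient `λᵢ = βᵢ^{n-k-1}(∏_{j≠i}(βᵢ - βⱼ))⁻¹`. -/
def lam (n k : ℕ) (β : Fin (n - k) → K) (i : Fin (n - k)) : K :=
  β i ^ (n - k - 1) * (∏ j ∈ Finset.univ.erase i, (β i - β j))⁻¹

lemma pow_mod_eq (l : ℕ) (γ : K) (hγ : γ ^ l = 1) (u : ℕ) : γ ^ (u % l) = γ ^ u := by
  conv_rhs => rw [← Nat.div_add_mod u l, pow_add, pow_mul, hγ, one_pow, one_mul]

lemma lagrange_pow [DecidableEq K] {r : ℕ} (hr : 0 < r) (β : Fin r → K)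
    (hinj : Function.Injective β) :
    (X : K[X]) ^ (r - 1) =
      ∑ i : Fin r, C (β i ^ (r - 1) * (∏ j ∈ Finset.univ.erase i, (β i - β j))⁻¹) *
        ∏ j ∈ Finset.univ.erase i, (X - C (β j)) := by
  have hcard : ((X : K[X]) ^ (r - 1)).degree < (Finset.univ : Finset (Fin r)).card := by
    simp only [degree_X_pow, Finset.card_univ, Fintype.card_fin]
    exact_mod_cast Nat.sub_lt hr one_pos
  have := Lagrange.eq_interpolate (f := (X : K[X]) ^ (r - 1)) (hinj.injOn) hcard
  rw [this, Lagrange.interpolate_apply]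
  refine Finset.sum_congr rfl fun i _ => ?_
  rw [Lagrange.basis]
  simp only [Lagrange.basisDivisor]
  rw [Finset.prod_mul_distrib, ← Finset.prod_inv_distrib, C_mul, ← map_prod]
  ring_nf
  simp [eval_pow]
  ring

lemma geom_fac (n : ℕ) (γ : K) (hγ : γ ^ n = 1) :
    (X - C γ) * ∑ u ∈ Finset.range n, C (γ ^ (n - 1 - u)) * X ^ u = X ^ n - 1 := by
  have := geom_sum₂_mul (X : K[X]) (C γ) n
  rw [mul_comm]
  calc (∑ u ∈ Finset.range n, C (γ ^ (n - 1 - u)) * X ^ u) * (X - C γ)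
      = (∑ u ∈ Finset.range n, (X : K[X]) ^ u * C γ ^ (n - 1 - u)) * (X - C γ) := by
        congr 1; refine Finset.sum_congr rfl fun u _ => ?_; rw [← C_pow]; ring
    _ = X ^ n - C γ ^ n := this
    _ = X ^ n - 1 := by rw [← C_pow, hγ, C_1]

lemma key_coeff [DecidableEq K] (n k : ℕ) (hk : k < n)
    (β : Fin (n - k) → K) (hinj : Function.Injective β) (hroot : ∀ i, β i ^ n = 1)
    (h : K[X]) (hdiv : (∏ i, (X - C (β i))) * h = X ^ n - 1)
    {v : ℕ} (hv : v < n) :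
    tildeH k h v = ∑ i, lam n k β i * β i ^ v := by
  have hr : 0 < n - k := by omega
  have hfac : ∀ i : Fin (n - k),
      (∏ j ∈ Finset.univ.erase i, (X - C (β j))) * h
        = ∑ u ∈ Finset.range n, C (β i ^ (n - 1 - u)) * X ^ u := by
    intro i
    apply mul_left_cancel₀ (X_sub_C_ne_zero (β i))
    rw [geom_fac n (β i) (hroot i), ← hdiv, ← mul_assoc]
    exact congrArg (· * h) (Finset.mul_prod_erase Finset.univ (fun j => X - C (β j))
      (Finset.mem_univ i))
  have main : (X : K[X]) ^ (n - k - 1) * h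
      = ∑ i : Fin (n - k), C (lam n k β i) *
          ∑ u ∈ Finset.range n, C (β i ^ (n - 1 - u)) * X ^ u := by
    calc (X : K[X]) ^ (n - k - 1) * h
        = (∑ i : Fin (n - k), C (lam n k β i) *
            ∏ j ∈ Finset.univ.erase i, (X - C (β j))) * h := by
          simp only [lam]
          rw [← lagrange_pow hr β hinj]
      _ = _ := by
          rw [Finset.sum_mul]
          exact Finset.sum_congr rfl fun i _ => by rw [mul_assoc, hfac i]
  have hlt : n - 1 - v < n := by omega
  have hexp : n - 1 - (n - 1 - v) = v := by omega
  have hG : ∀ i : Fin (n - k),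
      (∑ u ∈ Finset.range n, C (β i ^ (n - 1 - u)) * X ^ u).coeff (n - 1 - v) = β i ^ v := by
    intro i
    rw [finset_sum_coeff, Finset.sum_eq_single (n - 1 - v)]
    · rw [coeff_C_mul, coeff_X_pow, if_pos rfl, mul_one, hexp]
    · intro u _ hne
      rw [coeff_C_mul, coeff_X_pow, if_neg (fun hh => hne hh.symm), mul_zero]
    · intro hnot; exact absurd (Finset.mem_range.mpr hlt) hnot
  have hco : (h * X ^ (n - k - 1)).coeff (n - 1 - v) = ∑ i, lam n k β i * β i ^ v := by
    rw [mul_comm h, main, finset_sum_coeff]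
    exact Finset.sum_congr rfl fun i _ => by rw [coeff_C_mul, hG i]
  rw [tildeH, ← hco, coeff_mul_X_pow']
  by_cases hvk : v ≤ k
  · rw [if_pos hvk, if_pos (by omega : n - k - 1 ≤ n - 1 - v)]
    congr 1
    omega
  · rw [if_neg hvk, if_neg (by omega : ¬ (n - k - 1 ≤ n - 1 - v))]

/-- If nonzero distinct `l`-th roots of unity satisfy `∑ d e * γ e ^ u = 0` for all `u < l`,
then all `d e = 0`. -/
lemma vand_kill [DecidableEq K] {m l : ℕ} (hl : 0 < l) (γ : Fin m → K)
    (hγinj : Function.Injective γ) (hγ1 : ∀ e, γ e ^ l = 1)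
    (d : Fin m → K) (hd : ∀ u < l, ∑ e, d e * γ e ^ u = 0) (e0 : Fin m) : d e0 = 0 := by
  have hall : ∀ u : ℕ, ∑ e, d e * γ e ^ u = 0 := by
    intro u
    have := hd (u % l) (Nat.mod_lt _ hl)
    calc ∑ e, d e * γ e ^ u = ∑ e, d e * γ e ^ (u % l) := by
          refine Finset.sum_congr rfl fun e _ => ?_
          rw [pow_mod_eq l (γ e) (hγ1 e)]
      _ = 0 := this
  have hpoly : ∀ p : K[X], ∑ e, d e * p.eval (γ e) = 0 := by
    intro p
    calc ∑ e, d e * p.eval (γ e)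
        = ∑ e, ∑ u ∈ Finset.range (p.natDegree + 1), p.coeff u * (d e * γ e ^ u) := by
          refine Finset.sum_congr rfl fun e _ => ?_
          rw [eval_eq_sum_range, Finset.mul_sum]
          exact Finset.sum_congr rfl fun u _ => by ring
      _ = ∑ u ∈ Finset.range (p.natDegree + 1), p.coeff u * ∑ e, d e * γ e ^ u := by
          rw [Finset.sum_comm]
          exact Finset.sum_congr rfl fun u _ => by rw [Finset.mul_sum]
      _ = 0 := by simp [hall]
  have hp := hpoly (∏ e' ∈ Finset.univ.erase e0, (X - C (γ e')))
  rw [Finset.sum_eq_single e0] at hp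
  · have hne : (∏ e' ∈ Finset.univ.erase e0, (X - C (γ e'))).eval (γ e0) ≠ 0 := by
      rw [eval_prod]
      refine Finset.prod_ne_zero_iff.mpr fun e' he' => ?_
      simp only [eval_sub, eval_X, eval_C]
      exact sub_ne_zero_of_ne fun hh => (Finset.mem_erase.mp he').1 (hγinj hh.symm)
    exact (mul_eq_zero.mp hp).resolve_right hne
  · intro e' _ hne
    rw [eval_prod, Finset.prod_eq_zero (Finset.mem_erase.mpr ⟨hne, Finset.mem_univ e'⟩)]
    · exact mul_zero _
    · simp
  · intro hh; exact absurd (Finset.mem_univ e0) hh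

lemma psiSum_mulVec {m l : ℕ} (γ : Fin m → K) (hγ1 : ∀ e, γ e ^ l = 1)
    (Λ : Fin m → K) (x : Fin l → K) (i : Fin l) :
    (∑ e, Λ e • psiMat l (fun t => γ e ^ t)).mulVec x i
      = ∑ e, Λ e * γ e ^ (l - i.val) * ∑ t : Fin l, x t * γ e ^ (t : ℕ) := by
  have hkey : ∀ (e : Fin m) (jj : Fin l),
      γ e ^ ((jj.val + l - i.val) % l) = γ e ^ (l - i.val) * γ e ^ (jj.val) := by
    intro e jj
    rw [pow_mod_eq l (γ e) (hγ1 e), ← pow_add]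
    congr 1
    omega
  calc (∑ e, Λ e • psiMat l (fun t => γ e ^ t)).mulVec x i
      = ∑ jj : Fin l, (∑ e, Λ e * γ e ^ ((jj.val + l - i.val) % l)) * x jj := by
        simp [Matrix.mulVec, dotProduct, Matrix.sum_apply, psiMat, psiEnt]
    _ = ∑ e, ∑ jj : Fin l, Λ e * γ e ^ ((jj.val + l - i.val) % l) * x jj := by
        rw [Finset.sum_comm]
        exact Finset.sum_congr rfl fun jj _ => by rw [Finset.sum_mul]
    _ = ∑ e, Λ e * γ e ^ (l - i.val) * ∑ t : Fin l, x t * γ e ^ (t : ℕ) := by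
        refine Finset.sum_congr rfl fun e _ => ?_
        rw [Finset.mul_sum]
        refine Finset.sum_congr rfl fun jj _ => ?_
        rw [hkey e jj]
        ring

lemma part2 [DecidableEq K] {m l : ℕ} (hl : 0 < l) (γ : Fin m → K)
    (hγinj : Function.Injective γ) (hγne : ∀ e, γ e ≠ 0) (hγ1 : ∀ e, γ e ^ l = 1)
    (Λ : Fin m → K) (M : Matrix (Fin l) (Fin l) K)
    (hM : M = ∑ e, Λ e • psiMat l (fun t => γ e ^ t)) (e : Fin m) :
    (∀ x : Fin l → K, M.mulVec x = 0 → ∑ t : Fin l, x t * γ e ^ (t : ℕ) = 0) ↔ Λ e ≠ 0 := by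
  constructor
  · intro hprop
    intro hΛ0
    set p : K[X] := ∏ e' ∈ Finset.univ.erase e, (X - C (γ e')) with hp
    have hmonic : (X ^ l - C (1 : K)).Monic := monic_X_pow_sub_C 1 (by omega)
    set q : K[X] := p %ₘ (X ^ l - C 1) with hq
    have hqdeg : q.natDegree < l := by
      rcases eq_or_ne q 0 with h0 | h0
      · rw [h0]; simpa using hl
      · rw [natDegree_lt_iff_degree_lt h0]
        have := degree_modByMonic_lt p hmonic
        rwa [degree_X_pow_sub_C hl] at this
    set x : Fin l → K := fun t => q.coeff t with hx
    have hS : ∀ e', ∑ t : Fin l, x t * γ e' ^ (t : ℕ) = p.eval (γ e') := by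
      intro e'
      have h1 : ∑ t : Fin l, x t * γ e' ^ (t : ℕ) = q.eval (γ e') := by
        rw [eval_eq_sum_range' hqdeg (γ e'),
          ← Fin.sum_univ_eq_sum_range (fun t => q.coeff t * γ e' ^ t) l]
      have h2 : q.eval (γ e') = p.eval (γ e') := by
        conv_rhs => rw [← modByMonic_add_div p (X ^ l - C 1), ← hq]
        simp [hγ1 e']
      rw [h1, h2]
    have hMx : M.mulVec x = 0 := by
      funext i
      rw [hM, psiSum_mulVec γ hγ1 Λ x i]
      simp only [Pi.zero_apply]
      refine Finset.sum_eq_zero fun e' _ => ?_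
      rcases eq_or_ne e' e with rfl | hne
      · rw [hΛ0, zero_mul, zero_mul]
      · rw [hS e', hp, eval_prod,
          Finset.prod_eq_zero (Finset.mem_erase.mpr ⟨hne, Finset.mem_univ e'⟩) (by simp),
          mul_zero]
    have hfin := hprop x hMx
    rw [hS e, hp, eval_prod] at hfin
    have hnz : ∏ e' ∈ Finset.univ.erase e, eval (γ e) (X - C (γ e')) ≠ 0 := by
      refine Finset.prod_ne_zero_iff.mpr fun e' he' => ?_
      simp only [eval_sub, eval_X, eval_C]
      exact sub_ne_zero_of_ne fun hh => (Finset.mem_erase.mp he').1 (hγinj hh.symm)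
    exact hnz hfin
  · intro hΛne x hMx
    set d : Fin m → K := fun e' => Λ e' * (∑ t : Fin l, x t * γ e' ^ (t : ℕ)) * γ e' with hd
    have hdz : ∀ u < l, ∑ e', d e' * γ e' ^ u = 0 := by
      intro u hu
      have hi := congrFun hMx ⟨l - 1 - u, by omega⟩
      rw [hM, psiSum_mulVec γ hγ1 Λ x _] at hi
      simp only [Pi.zero_apply] at hi
      have hexp : l - (l - 1 - u) = u + 1 := by omega
      rw [← hi]
      refine Finset.sum_congr rfl fun e' _ => ?_
      simp only [hd, hexp, pow_succ]
      ring
    have hde := vand_kill hl γ hγinj hγ1 d hdz e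
    simp only [hd, mul_eq_zero] at hde
    rcases hde with ((hde | hde) | hde)
    · exact absurd hde hΛne
    · exact hde
    · exact absurd hde (hγne e)

/-- Decomposition of a type-1 descendant circulant and characterization of the roots of its
generator polynomial.  With the roots `β₀,…,β_{n-k-1}` of `g(X)` partitioned into `m`
classes of roots equal in `c`-th power (via the class map `cls` with representatives
`rep`), the circulant `Ψ(h̃ⱼ)` generated by the `j`-th cyclic section of the parity-check
vector equals `∑ₑ λ*_{e,j} Ψ(ṽ*_{e,0})`, where `λ*_{e,j} = ∑_f λ_{e,f} β_{e,f}^j` and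
`ṽ*_{e,0} = (1, β_{e,0}^c, β_{e,0}^{2c}, …, β_{e,0}^{(l-1)c})`; consequently the generator
polynomial of the cyclic code given by the null space of `Ψ(h̃ⱼ)` has `β_{e,0}^c` as a root
(i.e. every codeword polynomial vanishes at `β_{e,0}^c`) if and only if `λ*_{e,j} ≠ 0`. -/
theorem type1_descendant_decomposition_and_roots [DecidableEq K]
    (n k c l : ℕ) (hk : k < n) (hn : n = c * l) (hc : 0 < c) (hl : 0 < l)
    (β : Fin (n - k) → K) (hinj : Function.Injective β)
    (hne : ∀ i, β i ≠ 0) (hroot : ∀ i, β i ^ n = 1)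
    (h : K[X]) (hdiv : (∏ i, (X - C (β i))) * h = X ^ n - 1)
    (m : ℕ) (cls : Fin (n - k) → Fin m)
    (hcls : ∀ i i', cls i = cls i' ↔ β i ^ c = β i' ^ c)
    (rep : Fin m → Fin (n - k)) (hrep : ∀ e, cls (rep e) = e)
    (j : ℕ) (hj : j < c) :
    psiMat l (fun t => tildeH k h (t * c + j)) =
      ∑ e : Fin m,
        (∑ i ∈ Finset.univ.filter (fun i => cls i = e), lam n k β i * β i ^ j) •
          psiMat l (fun t => (β (rep e) ^ c) ^ t) ∧
    ∀ e : Fin m,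
      (∀ x : Fin l → K,
          (psiMat l (fun t => tildeH k h (t * c + j))).mulVec x = 0 →
            ∑ t : Fin l, x t * (β (rep e) ^ c) ^ (t : ℕ) = 0) ↔
        (∑ i ∈ Finset.univ.filter (fun i => cls i = e), lam n k β i * β i ^ j) ≠ 0 := by
  have hγ1 : ∀ e : Fin m, (β (rep e) ^ c) ^ l = 1 := by
    intro e
    rw [← pow_mul, ← hn]
    exact hroot _
  have hγne : ∀ e : Fin m, β (rep e) ^ c ≠ 0 := fun e => pow_ne_zero _ (hne _)
  have hγinj : Function.Injective (fun e : Fin m => β (rep e) ^ c) := by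
    intro e e' hee
    have : cls (rep e) = cls (rep e') := (hcls _ _).mpr hee
    rwa [hrep, hrep] at this
  have hβc : ∀ i : Fin (n - k), β i ^ c = β (rep (cls i)) ^ c :=
    fun i => (hcls i (rep (cls i))).mp (by rw [hrep])
  have hmat : psiMat l (fun t => tildeH k h (t * c + j)) =
      ∑ e : Fin m,
        (∑ i ∈ Finset.univ.filter (fun i => cls i = e), lam n k β i * β i ^ j) •
          psiMat l (fun t => (β (rep e) ^ c) ^ t) := by
    ext i j'
    have htl : (j'.val + l - i.val) % l < l := Nat.mod_lt _ hl
    set t := (j'.val + l - i.val) % l with ht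
    have hv : t * c + j < n :=
      calc t * c + j < (t + 1) * c := by rw [add_mul, one_mul]; omega
        _ ≤ l * c := Nat.mul_le_mul_right c (by omega)
        _ = n := by rw [hn, Nat.mul_comm]
    show tildeH k h (t * c + j) = _
    rw [key_coeff n k hk β hinj hroot h hdiv hv]
    have hterm : ∀ i' : Fin (n - k),
        lam n k β i' * β i' ^ (t * c + j)
          = lam n k β i' * β i' ^ j * (β (rep (cls i')) ^ c) ^ t := by
      intro i'
      rw [← hβc i', ← pow_mul, mul_assoc, ← pow_add,
        show j + c * t = t * c + j from by ring]
    calc ∑ i', lam n k β i' * β i' ^ (t * c + j)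
        = ∑ i', lam n k β i' * β i' ^ j * (β (rep (cls i')) ^ c) ^ t :=
          Finset.sum_congr rfl fun i' _ => hterm i'
      _ = ∑ e : Fin m, ∑ i' ∈ Finset.univ.filter (fun i' => cls i' = e),
            lam n k β i' * β i' ^ j * (β (rep (cls i')) ^ c) ^ t :=
          (Finset.sum_fiberwise Finset.univ cls
            (fun i' => lam n k β i' * β i' ^ j * (β (rep (cls i')) ^ c) ^ t)).symm
      _ = ∑ e : Fin m,
            (∑ i' ∈ Finset.univ.filter (fun i' => cls i' = e), lam n k β i' * β i' ^ j) *
              (β (rep e) ^ c) ^ t := by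
          refine Finset.sum_congr rfl fun e _ => ?_
          rw [Finset.sum_mul]
          refine Finset.sum_congr rfl fun i' hi' => ?_
          rw [(Finset.mem_filter.mp hi').2]
      _ = _ := by
          rw [Matrix.sum_apply]
          refine Finset.sum_congr rfl fun e _ => ?_
          simp [psiMat, psiEnt, Matrix.smul_apply, smul_eq_mul, ← ht]
  refine ⟨hmat, fun e => ?_⟩
  exact part2 hl (fun e => β (rep e) ^ c) hγinj hγne hγ1
    (fun e => ∑ i ∈ Finset.univ.filter (fun i => cls i = e), lam n k β i * β i ^ j)
    _ hmat e

end Paper
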